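/- Let n ≥ 2 and let (q_1,…,q_n) be a tuple of symmetric bilinear maps ℝ^n × ℝ^n → ℝ^n lying in Ker L^Ψ_I ∩ W, where I is the identity matrix. Then q_j(e_i,e_j) = q_j(e_j,e_i) = 0 for all i,j = 1,…,n. -/

import Mathlib

open scoped RealInnerProductSpace

noncomputable section

/-- `ℝ^n` with the Euclidean inner product and norm. -/
abbrev E (n : ℕ) : Type := EuclideanSpace ℝ (Fin n)

/-- The symmetric bilinear map `Q_v(ξ,η) = ⟨ξ,η⟩·v − ⟨ξ,v⟩·η − ⟨η,v⟩·ξ`. -/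
def Qv {n : ℕ} (v ξ η : E n) : E n := ⟪ξ, η⟫ • v - ⟪ξ, v⟫ • η - ⟪η, v⟫ • ξ

/-- The bracket `[Q,Q']` of two (symmetric bilinear) maps. -/
def brk {n : ℕ} (Q Q' : E n → E n → E n) (ξ η θ : E n) : E n :=
  (Q ξ (Q' η θ) + Q η (Q' θ ξ) + Q θ (Q' ξ η))
    - (Q' ξ (Q η θ) + Q' η (Q θ ξ) + Q' θ (Q ξ η))

/-- A map `ℝ^n × ℝ^n → ℝ^n` is a symmetric bilinear map. -/
def IsSymmBilin {n : ℕ} (q : E n → E n → E n) : Prop :=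
  (∀ ξ η, q ξ η = q η ξ) ∧ ∀ ξ, IsLinearMap ℝ (q ξ)

/-- The standard basis vectors `e_1, …, e_n` of `ℝ^n`. -/
def stdE (n : ℕ) (i : Fin n) : E n := EuclideanSpace.single i 1

/-- The `i`-th component of `L^Φ_B (A', B')`, where `v = v_i` is the `i`-th column of `B`
and `ω = ω_i` the `i`-th column of `B'`. -/
def LPhiC {n : ℕ} (A' : E n →ₗ[ℝ] E n) (v ω : E n) (ξ η : E n) : E n :=
  A' (Qv v ξ η) - Qv v (A' ξ) η - Qv v ξ (A' η) + Qv ω ξ η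

/-- `(q_1,…,q_n)` lies in the kernel of `L^Ψ_B`, where `v i` are the columns of `B`. -/
def KerPsi {n : ℕ} (v : Fin n → E n) (q : Fin n → E n → E n → E n) : Prop :=
  ∀ i j : Fin n, i < j → ∀ ξ η θ : E n,
    brk (q i) (Qv (v j)) ξ η θ = brk (q j) (Qv (v i)) ξ η θ

/-- `(q_1,…,q_n)` lies in the subspace `W`; `i0` is the index of the first coordinate. -/
def memW {n : ℕ} (i0 : Fin n) (q : Fin n → E n → E n → E n) : Prop :=
  (∀ j, q j (stdE n j) (stdE n j) = 0) ∧
  (∀ i j, ⟪stdE n i, q j (stdE n i) (stdE n i)⟫ + ⟪stdE n j, q i (stdE n j) (stdE n j)⟫ = 0) ∧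
  (∀ j, ⟪stdE n i0, q i0 (stdE n j) (stdE n j)⟫ = 0)

/-! Only the diagonal `(e_j, e_j, e_j)` of the kernel identity is needed: there
`[q_i, Q_{e_j}]` vanishes because `Q_{e_j}(e_j, ·) = -id`, while `[q_j, Q_{e_i}]` equals
`3 q_j(e_j, e_i)` because `Q_{e_i}(e_j, e_j) = e_i` and `q_j(e_j, e_j) = 0`. -/

section

variable {n : ℕ}

lemma inner_stdE (a b : Fin n) : ⟪stdE n a, stdE n b⟫ = if a = b then 1 else 0 := by
  simp only [stdE, EuclideanSpace.inner_single_left, PiLp.single_apply, conj_trivial, one_mul]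

lemma Qv_stdE_self_left (j : Fin n) (u : E n) : Qv (stdE n j) (stdE n j) u = -u := by
  rw [Qv, inner_stdE, real_inner_comm u (stdE n j)]
  simp

lemma Qv_stdE_of_ne {i j : Fin n} (hij : i ≠ j) :
    Qv (stdE n i) (stdE n j) (stdE n j) = stdE n i := by
  rw [Qv, inner_stdE, inner_stdE]
  simp [hij.symm]

lemma Qv_zero_right (v ξ : E n) : Qv v ξ 0 = 0 := by
  simp [Qv]

lemma brk_diag (Q Q' : E n → E n → E n) (ξ : E n) :
    brk Q Q' ξ ξ ξ = (3 : ℝ) • (Q ξ (Q' ξ ξ) - Q' ξ (Q ξ ξ)) := by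
  rw [brk]
  module

lemma brk_Qv_stdE_self_diag {Q : E n → E n → E n} {j : Fin n}
    (hQ : IsLinearMap ℝ (Q (stdE n j))) :
    brk Q (Qv (stdE n j)) (stdE n j) (stdE n j) (stdE n j) = 0 := by
  rw [brk_diag, Qv_stdE_self_left, Qv_stdE_self_left, hQ.map_neg, sub_neg_eq_add,
    neg_add_cancel, smul_zero]

lemma brk_Qv_stdE_diag_of_ne {Q : E n → E n → E n} {i j : Fin n} (hij : i ≠ j)
    (hQ : Q (stdE n j) (stdE n j) = 0) :
    brk Q (Qv (stdE n i)) (stdE n j) (stdE n j) (stdE n j) = (3 : ℝ) • Q (stdE n j) (stdE n i) := by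
  rw [brk_diag, Qv_stdE_of_ne hij, hQ, Qv_zero_right, sub_zero]

lemma KerPsi.brk_eq_of_ne {v : Fin n → E n} {q : Fin n → E n → E n → E n} (hker : KerPsi v q)
    {i j : Fin n} (hij : i ≠ j) (ξ η θ : E n) :
    brk (q i) (Qv (v j)) ξ η θ = brk (q j) (Qv (v i)) ξ η θ := by
  rcases hij.lt_or_gt with h | h
  · exact hker i j h ξ η θ
  · exact (hker j i h ξ η θ).symm

lemma KerPsi.apply_stdE_self_stdE_of_ne {q : Fin n → E n → E n → E n}
    (hker : KerPsi (stdE n) q) (hlin : ∀ i ξ, IsLinearMap ℝ (q i ξ))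
    (hdiag : ∀ j, q j (stdE n j) (stdE n j) = 0) {i j : Fin n} (hij : i ≠ j) :
    q j (stdE n j) (stdE n i) = 0 := by
  have h3 : (3 : ℝ) • q j (stdE n j) (stdE n i) = 0 := by
    rw [← brk_Qv_stdE_diag_of_ne hij (hdiag j), ← hker.brk_eq_of_ne hij,
      brk_Qv_stdE_self_diag (hlin i _)]
  exact (smul_eq_zero.mp h3).resolve_left three_ne_zero

end

/-- Lemma `lemma:inj 1`: for `n ≥ 2` and `(q_1,…,q_n) ∈ Ker L^Ψ_I ∩ W`,
`q_j(e_i,e_j) = q_j(e_j,e_i) = 0` for all `i, j`. -/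
theorem stmt6 {n : ℕ} (hn : 2 ≤ n)
    (q : Fin n → E n → E n → E n) (hq : ∀ i, IsSymmBilin (q i))
    (hker : KerPsi (stdE n) q) (hW : memW ⟨0, by omega⟩ q) :
    ∀ i j : Fin n, q j (stdE n i) (stdE n j) = 0 ∧ q j (stdE n j) (stdE n i) = 0 := by
  intro i j
  have hdiag := hW.1
  rcases eq_or_ne i j with rfl | hij
  · exact ⟨hdiag i, hdiag i⟩
  · have h := hker.apply_stdE_self_stdE_of_ne (fun k => (hq k).2) hdiag hij
    exact ⟨((hq j).1 _ _).trans h, h⟩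
end
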